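/- Let μ be a probability measure on G = (ℤ/2ℤ)³ with a_max = μ({0}) and a_max > 1/4. Suppose there is a decomposition G = X₁ ⊕ X₂ (X₁ ∈ 𝔄₁, X₂ ∈ 𝔄₂, X₁ ∩ X₂ = {0}) such that condition II.4 holds: (a) μ(X₂) = 1/2; (b) for every subgroup K ∈ 𝔄₂ with K ≠ X₂, μ ∈ V(K) or μ ∈ V(K̄); and (c) for every subgroup K ∈ 𝔄₂, μ ∈ U(K) or μ ∈ U(K̄). Then μ ∈ TEC(G). -/

import Mathlib

open scoped BigOperators

/-- The group `G = (ℤ/2ℤ)³`. -/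
abbrev G : Type := ZMod 2 × ZMod 2 × ZMod 2

/-- The character pairing `(x,y) = (-1)^(x₁y₁+x₂y₂+x₃y₃)`. -/
noncomputable def pairing (x y : G) : ℝ :=
  (-1 : ℝ) ^ (x.1.val * y.1.val + x.2.1.val * y.2.1.val + x.2.2.val * y.2.2.val)

/-- A probability measure on `G`, given by its mass function. -/
def IsProb (p : G → ℝ) : Prop := (∀ x, 0 ≤ p x) ∧ ∑ x : G, p x = 1

/-- The characteristic function `μ̂(y) = Σ_x (x,y) μ({x})`. -/
noncomputable def charFn (p : G → ℝ) (y : G) : ℝ := ∑ x : G, pairing x y * p x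

/-- The measure of a set `E ⊆ G`. -/
noncomputable def measOf (p : G → ℝ) (E : Set G) : ℝ := ∑ x : G, E.indicator p x

/-- `μ` has a trivial equivalence class: every probability measure `ν` with
`|ν̂| = |μ̂|` is a shift `μₓ` of `μ` (central symmetry is the identity on `G`). -/
def TEC (p : G → ℝ) : Prop :=
  ∀ q : G → ℝ, IsProb q → (∀ y : G, |charFn q y| = |charFn p y|) →
    ∃ x : G, ∀ e : G, q e = p (e + x)

/-- `u(E) = max_{x ∈ E} μ({x})`. -/
noncomputable def uOf (p : G → ℝ) (E : Set G) : ℝ := sSup (p '' E)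

/-- `v(E) = min_{x ∈ E} μ({x})`. -/
noncomputable def vOf (p : G → ℝ) (E : Set G) : ℝ := sInf (p '' E)

/-- `μ ∈ U(E)` iff `2 u(E) > μ(E)`. -/
def USet (p : G → ℝ) (E : Set G) : Prop := measOf p E < 2 * uOf p E

/-- `μ ∈ V(E)` iff `1/2 + 2 v(E) < μ(E)`. -/
def VSet (p : G → ℝ) (E : Set G) : Prop := 1/2 + 2 * vOf p E < measOf p E

/-!
Write `ν̂ = ε μ̂` with signs `ε(y) = ±1`. Condition (a) says that `μ̂` vanishes at the `y₂` with
`X₂ = y₂^⊥`, so `ε(y₂)` is irrelevant. Every sign pattern on the six remaining nonzero points is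
a character `(t, ·)`, a character flipped at a single point `y₀ ∉ {0, y₂}`, or a negated character
(the covering radius of the Hamming code is one, and the freedom at `y₂` absorbs the other cases).
By Fourier inversion `8 ν(x + t) = 8 μ(x) - 2 Σ_{y ∈ F} (x, y) μ̂(y)`, where `F` is the set of
flipped points. For `F = ∅` this says `ν = μ_t`. For `F = {y₀}`, condition (b) for `K = y₀^⊥`
gives an `x` with `ν(x + t) < 0`. For the negated character `8 ν(t) = 2 - 8 μ(0) < 0`.
-/

def dot (x y : G) : ZMod 2 := x.1 * y.1 + x.2.1 * y.2.1 + x.2.2 * y.2.2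

lemma dot_comm (x y : G) : dot x y = dot y x := by
  simp only [dot]; ring

lemma dot_add_left (x x' y : G) : dot (x + x') y = dot x y + dot x' y := by
  simp only [dot, Prod.fst_add, Prod.snd_add]; ring

lemma dot_zero_left (y : G) : dot 0 y = 0 := by
  simp [dot]

lemma exists_dot_eq_one : ∀ {x : G}, x ≠ 0 → ∃ y, dot x y = 1 := by
  decide

lemma dot_left_injective : ∀ y y' : G, (∀ x, dot x y = 0 ↔ dot x y' = 0) → y = y' := by
  decide

lemma zmod_two_eq_zero_or_eq_one : ∀ u : ZMod 2, u = 0 ∨ u = 1 := by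
  decide

lemma neg_one_pow_val_add (u v : ZMod 2) :
    (-1 : ℝ) ^ (u + v).val = (-1) ^ u.val * (-1) ^ v.val := by
  rw [ZMod.val_add, ← neg_one_pow_eq_pow_mod_two, pow_add]

lemma pairing_eq_neg_one_pow_dot (x y : G) : pairing x y = (-1) ^ (dot x y).val := by
  have h : dot x y =
      ((x.1.val * y.1.val + x.2.1.val * y.2.1.val + x.2.2.val * y.2.2.val : ℕ) : ZMod 2) := by
    simp [dot]
  rw [h, ZMod.val_natCast, ← neg_one_pow_eq_pow_mod_two]
  rfl

lemma pairing_eq_ite (x y : G) : pairing x y = if dot x y = 0 then 1 else -1 := by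
  rw [pairing_eq_neg_one_pow_dot]
  rcases zmod_two_eq_zero_or_eq_one (dot x y) with h | h
  · simp [h]
  · norm_num [h, show ZMod.val (1 : ZMod 2) = 1 from rfl]

lemma pairing_add_left (x x' y : G) : pairing (x + x') y = pairing x y * pairing x' y := by
  simp only [pairing_eq_neg_one_pow_dot, dot_add_left, neg_one_pow_val_add]

lemma pairing_comm (x y : G) : pairing x y = pairing y x := by
  rw [pairing_eq_neg_one_pow_dot, dot_comm, ← pairing_eq_neg_one_pow_dot]

lemma pairing_mul_self (x y : G) : pairing x y * pairing x y = 1 := by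
  rw [pairing_eq_ite]; split_ifs <;> norm_num

lemma pairing_zero_left (y : G) : pairing 0 y = 1 := by
  simp [pairing_eq_ite, dot_zero_left]

lemma sum_pairing (x : G) : ∑ y, pairing x y = if x = 0 then 8 else 0 := by
  split_ifs with hx
  · simp [hx, pairing_zero_left]
  · obtain ⟨y₀, hy₀⟩ := exists_dot_eq_one hx
    have hshift : ∑ y, pairing x y = pairing x y₀ * ∑ y, pairing x y := by
      rw [Finset.mul_sum, ← Equiv.sum_comp (Equiv.addRight y₀)]
      refine Finset.sum_congr rfl fun y _ => ?_
      simp only [Equiv.coe_addRight, pairing_comm x, pairing_add_left, mul_comm]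
    rw [pairing_eq_ite, hy₀, if_neg one_ne_zero] at hshift
    linarith

lemma sum_pairing_mul_charFn (f : G → ℝ) (e : G) : ∑ y, pairing e y * charFn f y = 8 * f e := by
  simp only [charFn, Finset.mul_sum]
  rw [Finset.sum_comm]
  calc ∑ x, ∑ y, pairing e y * (pairing x y * f x)
      = ∑ x, (∑ y, pairing (e + x) y) * f x := by
        simp only [pairing_add_left, Finset.sum_mul, mul_assoc]
    _ = 8 * f e := by
        have hinv : ∀ x, e + x = 0 ↔ x = e := fun x => CharTwo.add_eq_zero.trans eq_comm
        simp [sum_pairing, hinv]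

lemma charFn_zero (f : G → ℝ) : charFn f 0 = ∑ x, f x := by
  simp [charFn, pairing_comm _ 0, pairing_zero_left]

lemma sum_charFn (f : G → ℝ) : ∑ y, charFn f y = 8 * f 0 := by
  simpa [pairing_zero_left] using sum_pairing_mul_charFn f 0

lemma eight_mul_apply_add_of_charFn_eq {p q : G → ℝ} {t : G} {F : Finset G}
    (h : ∀ y, charFn q y = (if y ∈ F then -1 else 1) * (pairing t y * charFn p y)) (x : G) :
    8 * q (x + t) = 8 * p x - 2 * ∑ y ∈ F, pairing x y * charFn p y := by
  have hterm : ∀ y, pairing (x + t) y * charFn q y =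
      pairing x y * charFn p y - 2 * if y ∈ F then pairing x y * charFn p y else 0 := by
    intro y
    rw [h, pairing_add_left]
    split_ifs
    · linear_combination (-(pairing x y * charFn p y)) * pairing_mul_self t y
    · linear_combination (pairing x y * charFn p y) * pairing_mul_self t y
  rw [← sum_pairing_mul_charFn q, Finset.sum_congr rfl fun y _ => hterm y, Finset.sum_sub_distrib,
    ← Finset.mul_sum, Finset.sum_ite_mem, Finset.univ_inter, sum_pairing_mul_charFn]

def dotKer (y : G) : AddSubgroup G :=
  (AddMonoidHom.mk' (fun x => dot x y) fun x x' => dot_add_left x x' y).ker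

lemma mem_dotKer {x y : G} : x ∈ dotKer y ↔ dot x y = 0 := Iff.rfl

lemma card_dotKer {y : G} (hy : y ≠ 0) : Nat.card (dotKer y) = 4 := by
  rw [Nat.card_congr (Equiv.subtypeEquivRight fun x => mem_dotKer), Nat.card_eq_fintype_card,
    Fintype.card_subtype]
  revert y
  decide

lemma dotKer_injective : Function.Injective dotKer := fun y y' h =>
  dot_left_injective y y' fun x => by rw [← mem_dotKer, ← mem_dotKer, h]

set_option synthInstance.maxSize 1000 in
lemma exists_dot_iff_of_card_eq_four : ∀ S : Finset G, S.card = 4 → 0 ∈ S →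
    (∀ a ∈ S, ∀ b ∈ S, a + b ∈ S) → ∃ y, y ≠ 0 ∧ ∀ x, x ∈ S ↔ dot x y = 0 := by
  decide +kernel

lemma exists_eq_dotKer {K : AddSubgroup G} (hK : Nat.card K = 4) : ∃ y, y ≠ 0 ∧ K = dotKer y := by
  classical
  obtain ⟨y, hy, hmem⟩ := exists_dot_iff_of_card_eq_four (K : Set G).toFinset
    ((Nat.card_eq_card_toFinset (K : Set G)).symm.trans hK)
    (by simpa only [Set.mem_toFinset, SetLike.mem_coe] using K.zero_mem)
    (by simpa only [Set.mem_toFinset, SetLike.mem_coe] using fun a ha b hb => K.add_mem ha hb)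
  refine ⟨y, hy, AddSubgroup.ext fun x => ?_⟩
  simpa only [Set.mem_toFinset, SetLike.mem_coe, mem_dotKer] using hmem x

lemma indicator_dotKer (f : G → ℝ) (x y : G) :
    (dotKer y : Set G).indicator f x = (1 + pairing x y) / 2 * f x := by
  by_cases h : dot x y = 0
  · simp [Set.indicator_of_mem (show x ∈ (dotKer y : Set G) from h), pairing_eq_ite, h]
  · simp [Set.indicator_of_notMem (show x ∉ (dotKer y : Set G) from h), pairing_eq_ite, h]

lemma measOf_dotKer {p : G → ℝ} (hp : ∑ x, p x = 1) (y : G) :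
    measOf p (dotKer y) = (1 + charFn p y) / 2 := by
  simp only [measOf, indicator_dotKer, add_div, add_mul, Finset.sum_add_distrib, ← Finset.mul_sum,
    hp, charFn]
  rw [Finset.sum_div]
  ring_nf

lemma measOf_compl {p : G → ℝ} (hp : ∑ x, p x = 1) (E : Set G) :
    measOf p Eᶜ = 1 - measOf p E := by
  simp only [measOf, Set.indicator_compl, Pi.sub_apply, Finset.sum_sub_distrib, hp]

lemma exists_apply_eq_vOf (p : G → ℝ) {E : Set G} (hE : E.Nonempty) : ∃ x ∈ E, p x = vOf p E :=
  (hE.image p).csInf_mem (E.toFinite.image p)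

lemma exists_lt_pairing_mul_charFn_of_VSet {p : G → ℝ} (hp : ∑ x, p x = 1) {y : G} (hy : y ≠ 0)
    (hV : VSet p (dotKer y) ∨ VSet p (dotKer y : Set G)ᶜ) :
    ∃ x, 4 * p x < pairing x y * charFn p y := by
  rcases hV with hV | hV
  · obtain ⟨x, hx, hpx⟩ := exists_apply_eq_vOf p ⟨0, (dotKer y).zero_mem⟩
    rw [VSet, measOf_dotKer hp, ← hpx] at hV
    refine ⟨x, ?_⟩
    rw [pairing_eq_ite, if_pos (mem_dotKer.1 hx)]
    linarith
  · obtain ⟨x₀, hx₀⟩ := exists_dot_eq_one hy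
    have hx₀ : x₀ ∈ (dotKer y : Set G)ᶜ := by
      simp [mem_dotKer, dot_comm x₀, hx₀]
    obtain ⟨x, hx, hpx⟩ := exists_apply_eq_vOf p ⟨x₀, hx₀⟩
    rw [VSet, measOf_compl hp, measOf_dotKer hp, ← hpx] at hV
    refine ⟨x, ?_⟩
    rw [pairing_eq_ite, if_neg (show ¬dot x y = 0 from hx)]
    linarith

def cubicPart (a b c d : ZMod 2) (y : G) : ZMod 2 :=
  a * y.1 * y.2.1 + b * y.1 * y.2.2 + c * y.2.1 * y.2.2 + d * y.1 * y.2.1 * y.2.2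

-- The coefficients come from Möbius inversion over the coordinate cube.
lemma exists_eq_dot_add_cubicPart {l : G → ZMod 2} (hl : l 0 = 0) :
    ∃ t a b c d, ∀ y, l y = dot t y + cubicPart a b c d y := by
  refine ⟨(l (1, 0, 0), l (0, 1, 0), l (0, 0, 1)),
    l (1, 1, 0) - l (1, 0, 0) - l (0, 1, 0), l (1, 0, 1) - l (1, 0, 0) - l (0, 0, 1),
    l (0, 1, 1) - l (0, 1, 0) - l (0, 0, 1),
    l (1, 1, 1) - l (1, 1, 0) - l (1, 0, 1) - l (0, 1, 1) + l (1, 0, 0) + l (0, 1, 0) + l (0, 0, 1),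
    ?_⟩
  rintro ⟨y₁, y₂, y₃⟩
  rcases zmod_two_eq_zero_or_eq_one y₁ with rfl | rfl <;>
    rcases zmod_two_eq_zero_or_eq_one y₂ with rfl | rfl <;>
    rcases zmod_two_eq_zero_or_eq_one y₃ with rfl | rfl
  · simp only [dot, cubicPart, mul_zero, add_zero]
    exact hl
  all_goals simp only [dot, cubicPart]; ring

set_option synthInstance.maxSize 1000 in
lemma cubicPart_near_dot : ∀ (a b c d : ZMod 2) (y₂ : G), y₂ ≠ 0 →
    (∃ t, ∀ y, y ≠ y₂ → cubicPart a b c d y = dot t y) ∨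
    (∃ t y₀, y₀ ≠ 0 ∧ y₀ ≠ y₂ ∧
      ∀ y, y ≠ y₂ → cubicPart a b c d y = dot t y + if y = y₀ then 1 else 0) ∨
    (∃ t, ∀ y, y ≠ 0 → y ≠ y₂ → cubicPart a b c d y = dot t y + 1) := by
  decide +kernel

def IsFlipSet (y₂ : G) (F : Finset G) : Prop :=
  F = ∅ ∨ (∃ y₀, y₀ ≠ 0 ∧ y₀ ≠ y₂ ∧ F = {y₀}) ∨ F = Finset.univ.erase 0

lemma exists_dot_add_flip {l : G → ZMod 2} (hl : l 0 = 0) {y₂ : G} (hy₂ : y₂ ≠ 0) :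
    ∃ t F, IsFlipSet y₂ F ∧
      ∀ y, y ≠ y₂ → l y = dot t y + if y ∈ F then 1 else 0 := by
  obtain ⟨t₀, a, b, c, d, hdec⟩ := exists_eq_dot_add_cubicPart hl
  rcases cubicPart_near_dot a b c d y₂ hy₂ with ⟨t, ht⟩ | ⟨t, y₀, h₀, h₂, ht⟩ | ⟨t, ht⟩
  · refine ⟨t₀ + t, ∅, Or.inl rfl, fun y hy => ?_⟩
    rw [hdec, ht y hy, dot_add_left, if_neg (Finset.notMem_empty y), add_zero]
  · refine ⟨t₀ + t, {y₀}, Or.inr (Or.inl ⟨y₀, h₀, h₂, rfl⟩), fun y hy => ?_⟩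
    rw [hdec, ht y hy, dot_add_left, add_assoc]
    simp only [Finset.mem_singleton]
  · refine ⟨t₀ + t, Finset.univ.erase 0, Or.inr (Or.inr rfl), fun y hy => ?_⟩
    rcases eq_or_ne y 0 with rfl | hy₀
    · simp [hl, dot]
    · rw [hdec, ht y hy₀ hy, dot_add_left, if_pos (Finset.mem_erase.2 ⟨hy₀, Finset.mem_univ y⟩),
        add_assoc]

lemma exists_charFn_eq_flip {p q : G → ℝ} {y₂ : G} (hy₂ : y₂ ≠ 0) (hp₂ : charFn p y₂ = 0)
    (h₀ : charFn q 0 = charFn p 0) (habs : ∀ y, |charFn q y| = |charFn p y|) :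
    ∃ t F, IsFlipSet y₂ F ∧
      ∀ y, charFn q y = (if y ∈ F then -1 else 1) * (pairing t y * charFn p y) := by
  set l : G → ZMod 2 := fun y => if charFn q y = charFn p y then 0 else 1
  have hl : ∀ y, charFn q y = (-1) ^ (l y).val * charFn p y := by
    intro y
    by_cases h : charFn q y = charFn p y
    · simp [l, h]
    · have hneg : charFn q y = -charFn p y := (abs_eq_abs.1 (habs y)).resolve_left h
      simp only [l, if_neg h]
      norm_num [hneg, show ZMod.val (1 : ZMod 2) = 1 from rfl]
  obtain ⟨t, F, hF, hlF⟩ := exists_dot_add_flip (l := l) (by simp [l, h₀]) hy₂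
  refine ⟨t, F, hF, fun y => ?_⟩
  rcases eq_or_ne y y₂ with rfl | hy
  · have hq₂ : charFn q y = 0 := abs_eq_zero.1 ((habs y).trans (by rw [hp₂, abs_zero]))
    rw [hq₂, hp₂, mul_zero, mul_zero]
  · rw [hl, hlF y hy, neg_one_pow_val_add, ← pairing_eq_neg_one_pow_dot]
    split_ifs <;> norm_num [show ZMod.val (1 : ZMod 2) = 1 from rfl]

theorem stmt6_general (p : G → ℝ) (hp : IsProb p)
    (hgt : 1/4 < p 0)
    (X₂ : AddSubgroup G) (hX₂ : Nat.card X₂ = 4)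
    (hII4a : measOf p (X₂ : Set G) = 1/2)
    (hII4b : ∀ K : AddSubgroup G, Nat.card K = 4 → K ≠ X₂ →
      VSet p (K : Set G) ∨ VSet p ((K : Set G))ᶜ) :
    TEC p := by
  obtain ⟨y₂, hy₂, rfl⟩ := exists_eq_dotKer hX₂
  have hp₂ : charFn p y₂ = 0 := by
    rw [measOf_dotKer hp.2] at hII4a
    linarith
  intro q hq habs
  obtain ⟨t, F, hF, hqF⟩ :=
    exists_charFn_eq_flip hy₂ hp₂ (by rw [charFn_zero, charFn_zero, hp.2, hq.2]) habs
  have hinv := eight_mul_apply_add_of_charFn_eq hqF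
  rcases hF with rfl | ⟨y₀, hy₀, hy₀₂, rfl⟩ | rfl
  · refine ⟨t, fun e => ?_⟩
    have he := hinv (e + t)
    rw [CharTwo.add_cancel_right, Finset.sum_empty] at he
    linarith
  · obtain ⟨x, hx⟩ := exists_lt_pairing_mul_charFn_of_VSet hp.2 hy₀
      (hII4b _ (card_dotKer hy₀) (dotKer_injective.ne hy₀₂))
    have hx' := hinv x
    rw [Finset.sum_singleton] at hx'
    linarith [hq.1 (x + t)]
  · have h₀ := hinv 0
    simp only [pairing_zero_left, one_mul] at h₀
    rw [Finset.sum_erase_eq_sub (Finset.mem_univ 0), sum_charFn, charFn_zero, hp.2] at h₀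
    linarith [hq.1 (0 + t)]

/-- `a_max = μ({0}) > 1/4`, with a decomposition `G = X₁ ⊕ X₂` satisfying
condition II.4, implies `μ ∈ TEC(G)`. -/
theorem stmt6 (p : G → ℝ) (hp : IsProb p)
    (hmax : ∀ x : G, p x ≤ p 0) (hgt : 1/4 < p 0)
    (X₁ X₂ : AddSubgroup G) (hX₁ : Nat.card X₁ = 2) (hX₂ : Nat.card X₂ = 4)
    (hinf : X₁ ⊓ X₂ = ⊥) (hsup : X₁ ⊔ X₂ = ⊤)
    (hII4a : measOf p (X₂ : Set G) = 1/2)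
    (hII4b : ∀ K : AddSubgroup G, Nat.card K = 4 → K ≠ X₂ →
      VSet p (K : Set G) ∨ VSet p ((K : Set G))ᶜ)
    (hII4c : ∀ K : AddSubgroup G, Nat.card K = 4 →
      USet p (K : Set G) ∨ USet p ((K : Set G))ᶜ) :
    TEC p :=
  stmt6_general p hp hgt X₂ hX₂ hII4a hII4b
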